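/- Replacing sin²ϑ by ϑ² (Observation V): Fix integers 1 ≤ k ≤ n, set α = (kn−2)/2, α' = (n−k−1)/2, β = n/2, c = σ_n/2, and g(s) = c ∫_0^s t^{β−1}(1−t)^{−1/2} dt. For ρ > 0 let J_1(δ) = ρ^k ∫_0^δ t^α (1−t)^{α'} e^{−ρ g(t)} dt. Then for all 0 < ϑ ≤ 1/√2 and all ρ > 0, |J_1(sin²ϑ) − J_1(ϑ²)| ≤ 4 ρ^k ϑ^{2α+3}. -/

import Mathlib

/-!
Writing `J₁(δ) = ρ^k ∫_0^δ F`, the difference is `ρ^k` times the integral of `F` over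
`[sin² ϑ, ϑ²]`. On this interval `e^{-ρ g} ≤ 1`, `(1-t)^{α'} ≤ 2` because `t ≤ 1/2`, and
`t^α ≤ 2 ϑ^{2α}` because `sin ϑ ≥ ϑ/2`; the interval has length at most `ϑ⁴/3`
because `sin ϑ > ϑ - ϑ³/6`.
-/

open MeasureTheory Set

noncomputable section

/-- `σ_n`, the `(n-1)`-dimensional surface area of the unit sphere `S^{n-1} ⊆ ℝ^n`,
expressed as `n` times the volume of the unit ball in `ℝ^n`. -/
def sphereArea (n : ℕ) : ℝ :=
  n * (volume (Metric.ball (0 : EuclideanSpace ℝ (Fin n)) 1)).toReal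

/-- `g(s) = c ∫_0^s t^(β-1) (1-t)^(-1/2) dt` with `c = σ_n/2` and `β = n/2`:
the area of the spherical cap on `S^n` whose Euclidean radius is `√s`. -/
def gFun (n : ℕ) (s : ℝ) : ℝ :=
  (sphereArea n / 2) * ∫ t in (0:ℝ)..s, t ^ ((n:ℝ)/2 - 1) * (1 - t) ^ (-(1:ℝ)/2)

/-- `J₁(δ) = ρ^k ∫_0^δ t^α (1-t)^{α'} e^{-ρ g(t)} dt`,
with `α = (kn-2)/2` and `α' = (n-k-1)/2`. -/
def J₁ (n k : ℕ) (ρ δ : ℝ) : ℝ :=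
  ρ ^ k * ∫ t in (0:ℝ)..δ,
    t ^ ((((k*n : ℕ) : ℝ) - 2) / 2) * (1 - t) ^ (((n:ℝ) - (k:ℝ) - 1) / 2) *
      Real.exp (-ρ * gFun n t)

/-- `J₂(δ) = ρ^k ∫_0^δ t^α e^{-ρ g(t)} dt`, with `α = (kn-2)/2`. -/
def J₂ (n k : ℕ) (ρ δ : ℝ) : ℝ :=
  ρ ^ k * ∫ t in (0:ℝ)..δ,
    t ^ ((((k*n : ℕ) : ℝ) - 2) / 2) * Real.exp (-ρ * gFun n t)

/-- `J₃(δ) = ρ^k ∫_0^δ t^α e^{-ρ (c/β) t^β} dt`, with `α = (kn-2)/2`, `β = n/2`,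
`c = σ_n/2`. -/
def J₃ (n k : ℕ) (ρ δ : ℝ) : ℝ :=
  ρ ^ k * ∫ t in (0:ℝ)..δ,
    t ^ ((((k*n : ℕ) : ℝ) - 2) / 2) *
      Real.exp (-ρ * ((sphereArea n / 2) / ((n:ℝ)/2)) * t ^ ((n:ℝ)/2))

open Real

lemma rpow_le_two_of_half_le {x z : ℝ} (hx : 1 / 2 ≤ x) (hx1 : x ≤ 1) (hz : -1 / 2 ≤ z) :
    x ^ z ≤ 2 :=
  calc x ^ z ≤ x ^ (-1 / 2 : ℝ) := rpow_le_rpow_of_exponent_ge (by linarith) hx1 hz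
    _ ≤ (1 / 2 : ℝ) ^ (-1 / 2 : ℝ) := rpow_le_rpow_of_nonpos (by norm_num) hx (by norm_num)
    _ = √2 := by
      rw [neg_div, rpow_neg (by norm_num), ← inv_rpow (by norm_num), one_div, inv_inv,
        sqrt_eq_rpow, one_div]
    _ ≤ 2 := by
      rw [sqrt_le_left zero_le_two]
      norm_num

lemma sq_sub_sin_sq_le {ϑ : ℝ} (hϑ : 0 < ϑ) : ϑ ^ 2 - sin ϑ ^ 2 ≤ ϑ ^ 4 / 3 := by
  have h_lower := sin_gt_sub_cube hϑ
  have h_abs := abs_sin_le_abs (x := ϑ)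
  rw [abs_of_pos hϑ, abs_le] at h_abs
  have : (ϑ - sin ϑ) * (ϑ + sin ϑ) ≤ ϑ ^ 3 / 6 * (2 * ϑ) :=
    mul_le_mul (by linarith) (by linarith) (by linarith) (by positivity)
  nlinarith

lemma half_le_sin {ϑ : ℝ} (hϑ : 0 ≤ ϑ) (hϑ1 : ϑ ≤ 1) : ϑ / 2 ≤ sin ϑ := by
  have h_jordan := mul_le_sin hϑ (by linarith [pi_gt_three])
  have : ϑ / 2 ≤ 2 / π * ϑ := by
    rw [div_mul_eq_mul_div, div_le_div_iff₀ two_pos pi_pos]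
    nlinarith [pi_lt_four]
  linarith

lemma rpow_le_of_sin_sq_le {ϑ A t : ℝ} (hϑ : 0 < ϑ) (hϑ1 : ϑ ≤ 1) (hA : -1 / 2 ≤ A)
    (ht : sin ϑ ^ 2 ≤ t) (ht' : t ≤ ϑ ^ 2) : t ^ A ≤ 2 * ϑ ^ (2 * A) := by
  have h_lower : (ϑ / 2) ^ 2 ≤ t :=
    (pow_le_pow_left₀ (by positivity) (half_le_sin hϑ.le hϑ1) 2).trans ht
  have ht0 : 0 < t := lt_of_lt_of_le (by positivity) h_lower
  -- Split off `t^{-1/2}`, which is bounded via the lower end `sin² ϑ ≥ (ϑ/2)²`.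
  have h_pos : t ^ (A + 1 / 2) ≤ ϑ ^ (2 * A + 1) := by
    calc t ^ (A + 1 / 2) ≤ (ϑ ^ 2) ^ (A + 1 / 2) := rpow_le_rpow ht0.le ht' (by linarith)
      _ = ϑ ^ (2 * A + 1) := by
        rw [← rpow_natCast_mul hϑ.le]
        push_cast
        ring_nf
  have h_neg : t ^ (-1 / 2 : ℝ) ≤ 2 * ϑ ^ (-1 : ℝ) := by
    calc t ^ (-1 / 2 : ℝ) ≤ ((ϑ / 2) ^ 2) ^ (-1 / 2 : ℝ) :=
          rpow_le_rpow_of_nonpos (by positivity) h_lower (by norm_num)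
      _ = 2 * ϑ ^ (-1 : ℝ) := by
        rw [← rpow_natCast_mul (by positivity)]
        norm_num
        rw [rpow_neg_one, rpow_neg_one]
        field_simp
  calc t ^ A = t ^ (A + 1 / 2) * t ^ (-1 / 2 : ℝ) := by rw [← rpow_add ht0]; ring_nf
    _ ≤ ϑ ^ (2 * A + 1) * (2 * ϑ ^ (-1 : ℝ)) :=
        mul_le_mul h_pos h_neg (by positivity) (by positivity)
    _ = 2 * ϑ ^ (2 * A) := by
        rw [mul_left_comm, ← rpow_add hϑ]
        ring_nf

lemma gFun_nonneg (n : ℕ) {t : ℝ} (ht : 0 ≤ t) (ht1 : t ≤ 1) : 0 ≤ gFun n t := by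
  unfold gFun sphereArea
  refine mul_nonneg (by positivity) (intervalIntegral.integral_nonneg ht fun u hu => ?_)
  exact mul_nonneg (rpow_nonneg hu.1 _) (rpow_nonneg (by linarith [hu.2]) _)

lemma continuousOn_one_sub_rpow {b : ℝ} (hb : b < 1) (z : ℝ) :
    ContinuousOn (fun t : ℝ => (1 - t) ^ z) (uIcc 0 b) := by
  refine ContinuousOn.rpow_const (by fun_prop) fun t ht => Or.inl ?_
  have : t ≤ max 0 b := ht.2
  have : max 0 b < 1 := max_lt one_pos hb
  linarith

lemma continuousOn_gFun {n : ℕ} (hn : 0 < n) {b : ℝ} (hb : b < 1) :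
    ContinuousOn (gFun n) (uIcc 0 b) := by
  have hexp : -1 < (n : ℝ) / 2 - 1 := by
    have : (0 : ℝ) < n := Nat.cast_pos.mpr hn
    linarith
  refine continuousOn_const.mul
    (intervalIntegral.continuousOn_primitive_interval' ?_ left_mem_uIcc)
  exact (intervalIntegral.intervalIntegrable_rpow' hexp).mul_continuousOn
    (continuousOn_one_sub_rpow hb _)

def J₁Integrand (n : ℕ) (A A' ρ t : ℝ) : ℝ :=
  t ^ A * (1 - t) ^ A' * exp (-ρ * gFun n t)

lemma J₁_eq_integral_J₁Integrand (n k : ℕ) (ρ δ : ℝ) :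
    J₁ n k ρ δ = ρ ^ k * ∫ t in (0 : ℝ)..δ,
      J₁Integrand n ((((k * n : ℕ) : ℝ) - 2) / 2) (((n : ℝ) - k - 1) / 2) ρ t :=
  rfl

section J₁Integrand

variable {n : ℕ} {A A' ρ : ℝ}

lemma intervalIntegrable_J₁Integrand (hn : 0 < n) (hA : -1 < A) {b : ℝ} (hb : b < 1) :
    IntervalIntegrable (J₁Integrand n A A' ρ) volume 0 b := by
  have hcont : ContinuousOn (fun t => (1 - t) ^ A' * exp (-ρ * gFun n t)) (uIcc 0 b) :=
    (continuousOn_one_sub_rpow hb A').mul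
      (continuous_exp.comp_continuousOn (continuousOn_const.mul (continuousOn_gFun hn hb)))
  have h_eq : J₁Integrand n A A' ρ = fun t => t ^ A * ((1 - t) ^ A' * exp (-ρ * gFun n t)) := by
    funext t
    rw [J₁Integrand, mul_assoc]
  rw [h_eq]
  exact (intervalIntegral.intervalIntegrable_rpow' hA).mul_continuousOn hcont

lemma norm_J₁Integrand_le (hρ : 0 ≤ ρ) (hA' : -1 / 2 ≤ A') {t : ℝ} (ht : 0 ≤ t)
    (ht' : t ≤ 1 / 2) :
    ‖J₁Integrand n A A' ρ t‖ ≤ 2 * t ^ A := by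
  have h_one_sub : (1 - t) ^ A' ≤ 2 := rpow_le_two_of_half_le (by linarith) (by linarith) hA'
  have h_exp : exp (-ρ * gFun n t) ≤ 1 :=
    exp_le_one_iff.mpr (by nlinarith [gFun_nonneg n ht (by linarith)])
  have h_tA : 0 ≤ t ^ A := rpow_nonneg ht _
  have h_one_sub_nonneg : 0 ≤ (1 - t) ^ A' := rpow_nonneg (by linarith) A'
  rw [J₁Integrand, Real.norm_eq_abs, abs_of_nonneg (by positivity)]
  calc t ^ A * (1 - t) ^ A' * exp (-ρ * gFun n t) ≤ t ^ A * 2 * 1 :=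
        mul_le_mul (mul_le_mul_of_nonneg_left h_one_sub h_tA) h_exp (exp_pos _).le (by positivity)
    _ = 2 * t ^ A := by ring

lemma abs_integral_J₁Integrand_sin_sq_le (hA : -1 / 2 ≤ A) (hA' : -1 / 2 ≤ A') (hρ : 0 ≤ ρ)
    {ϑ : ℝ} (hϑ : 0 < ϑ) (hϑ2 : ϑ ^ 2 ≤ 1 / 2) :
    |∫ t in ϑ ^ 2..sin ϑ ^ 2, J₁Integrand n A A' ρ t| ≤ 4 / 3 * ϑ ^ (2 * A + 4) := by
  have hϑ1 : ϑ ≤ 1 := by nlinarith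
  have h_bound :
      ∀ t ∈ uIoc (ϑ ^ 2) (sin ϑ ^ 2), ‖J₁Integrand n A A' ρ t‖ ≤ 4 * ϑ ^ (2 * A) := by
    intro t ht
    rw [uIoc_of_ge sin_sq_le_sq] at ht
    have ht0 : 0 ≤ t := (sq_nonneg _).trans ht.1.le
    calc ‖J₁Integrand n A A' ρ t‖ ≤ 2 * t ^ A :=
          norm_J₁Integrand_le hρ hA' ht0 (ht.2.trans hϑ2)
      _ ≤ 2 * (2 * ϑ ^ (2 * A)) :=
          mul_le_mul_of_nonneg_left (rpow_le_of_sin_sq_le hϑ hϑ1 hA ht.1.le ht.2) two_pos.le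
      _ = 4 * ϑ ^ (2 * A) := by ring
  have h_len : |sin ϑ ^ 2 - ϑ ^ 2| ≤ ϑ ^ 4 / 3 := by
    rw [abs_sub_comm, abs_of_nonneg (sub_nonneg.mpr sin_sq_le_sq)]
    exact sq_sub_sin_sq_le hϑ
  calc |∫ t in ϑ ^ 2..sin ϑ ^ 2, J₁Integrand n A A' ρ t|
      ≤ 4 * ϑ ^ (2 * A) * |sin ϑ ^ 2 - ϑ ^ 2| :=
        intervalIntegral.norm_integral_le_of_norm_le_const h_bound
    _ ≤ 4 * ϑ ^ (2 * A) * (ϑ ^ 4 / 3) :=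
        mul_le_mul_of_nonneg_left h_len (by positivity)
    _ = 4 / 3 * ϑ ^ (2 * A + 4) := by
        rw [rpow_add hϑ, ← rpow_natCast ϑ 4]
        push_cast
        ring

end J₁Integrand

lemma sq_le_half_of_le_inv_sqrt_two {ϑ : ℝ} (hϑ : 0 ≤ ϑ) (hϑ' : ϑ ≤ 1 / √2) :
    ϑ ^ 2 ≤ 1 / 2 := by
  calc ϑ ^ 2 ≤ (1 / √2) ^ 2 := pow_le_pow_left₀ hϑ hϑ' 2
    _ = 1 / 2 := by rw [div_pow, one_pow, sq_sqrt zero_le_two]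

/-- **Replacing `sin² ϑ` by `ϑ²` (Observation V).**
`|J₁(sin² ϑ) - J₁(ϑ²)| ≤ 4 ρ^k ϑ^{2α+3}` for all `0 < ϑ ≤ 1/√2` and all `ρ > 0`,
where `2α + 3 = kn + 1`. -/
theorem replace_sin (n k : ℕ) (hk : 1 ≤ k) (hkn : k ≤ n)
    (ϑ : ℝ) (hϑ : 0 < ϑ) (hϑ' : ϑ ≤ 1 / Real.sqrt 2) (ρ : ℝ) (hρ : 0 < ρ) :
    |J₁ n k ρ (Real.sin ϑ ^ 2) - J₁ n k ρ (ϑ ^ 2)| ≤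
      4 * ρ ^ k * ϑ ^ (2 * ((((k*n : ℕ) : ℝ) - 2) / 2) + 3) := by
  have hn : 0 < n := hk.trans hkn
  have hA : -1 / 2 ≤ (((k * n : ℕ) : ℝ) - 2) / 2 := by
    have : (1 : ℝ) ≤ ((k * n : ℕ) : ℝ) := by
      exact_mod_cast Nat.one_le_iff_ne_zero.mpr (by positivity)
    linarith
  have hA' : -1 / 2 ≤ ((n : ℝ) - k - 1) / 2 := by
    have : (k : ℝ) ≤ n := by exact_mod_cast hkn
    linarith
  set A : ℝ := (((k * n : ℕ) : ℝ) - 2) / 2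
  have hϑ2 := sq_le_half_of_le_inv_sqrt_two hϑ.le hϑ'
  have hϑ1 : ϑ ≤ 1 := by nlinarith
  have h_int (δ : ℝ) (hδ : δ ≤ 1 / 2) :=
    intervalIntegrable_J₁Integrand (A' := ((n : ℝ) - k - 1) / 2) (ρ := ρ) hn
      (by linarith : -1 < A) (by linarith : δ < 1)
  rw [J₁_eq_integral_J₁Integrand, J₁_eq_integral_J₁Integrand, ← mul_sub,
    intervalIntegral.integral_interval_sub_left (h_int _ (sin_sq_le_sq.trans hϑ2)) (h_int _ hϑ2),
    abs_mul, abs_of_pos (by positivity)]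
  calc ρ ^ k * |∫ t in ϑ ^ 2..sin ϑ ^ 2, J₁Integrand n A (((n : ℝ) - k - 1) / 2) ρ t|
      ≤ ρ ^ k * (4 / 3 * ϑ ^ (2 * A + 4)) :=
        mul_le_mul_of_nonneg_left (abs_integral_J₁Integrand_sin_sq_le hA hA' hρ.le hϑ hϑ2)
          (by positivity)
    _ ≤ ρ ^ k * (4 * ϑ ^ (2 * A + 3)) := by
        have := rpow_le_rpow_of_exponent_ge hϑ hϑ1 (by linarith : 2 * A + 3 ≤ 2 * A + 4)
        have := rpow_nonneg hϑ.le (2 * A + 4)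
        gcongr
        linarith
    _ = 4 * ρ ^ k * ϑ ^ (2 * A + 3) := by ring
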